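/- arXiv:hep-th/0312049 — 5 statements merged into one kernel-verified Lean document; each statement's English description precedes it below -/
import Mathlib

section
/- Let G be a locally compact topological group with a left Haar measure dz, let (M, dm) be a measure space equipped with a measurable left action ρ of G, and let φ : M → G be a measurable map satisfying the equivariance condition φ(ρ(g)m) = g·φ(m)·g⁻¹ for all g ∈ G, m ∈ M. For a continuous compactly supported F : G × G → ℂ define (Π(F)ψ)(m) = ∫_G F(z, φ(m)) ψ(ρ(z⁻¹)m) dz. Then for all continuous compactly supported F₁, F₂ : G × G → ℂ and every bounded measurable ψ : M → ℂ one has Π(F₁ • F₂)ψ = Π(F₁)(Π(F₂)ψ) pointwise on M, where (F₁ • F₂)(v,u) = ∫_G F₁(z,u) F₂(z⁻¹v, z⁻¹uz) dz is the multiplication of the quantum double D(G). -/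
open MeasureTheory

/-- The multiplication of the quantum double `D(G)`:
`(F₁ • F₂)(v,u) = ∫_G F₁(z,u) F₂(z⁻¹v, z⁻¹uz) dz`. -/
noncomputable def qdMul {G : Type*} [Group G] [MeasurableSpace G]
    (μ : Measure G) (F₁ F₂ : G × G → ℂ) : G × G → ℂ :=
  fun p => ∫ z, F₁ (z, p.2) * F₂ (z⁻¹ * p.1, z⁻¹ * p.2 * z) ∂μ

/-- The representation `(Π(F)ψ)(m) = ∫_G F(z, φ(m)) ψ(ρ(z⁻¹)m) dz`. -/
noncomputable def qdRep {G M : Type*} [Group G] [MeasurableSpace G]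
    (μ : Measure G) (ρ : G → M → M) (φ : M → G)
    (F : G × G → ℂ) (ψ : M → ℂ) : M → ℂ :=
  fun m => ∫ z, F (z, φ m) * ψ (ρ z⁻¹ m) ∂μ

/-!
At a point `m`, both sides are iterated integrals over `(z, v)` of
`F₁(z, φ m) F₂(z⁻¹v, z⁻¹ φ(m) z) ψ(ρ(v⁻¹) m)`, in the two orders: on the right-hand side this
comes from the substitution `w ↦ z w` in the inner integral, using left invariance of `μ`,
`ρ(w⁻¹) ρ(z⁻¹) = ρ((z w)⁻¹)` and `φ(ρ(z⁻¹) m) = z⁻¹ φ(m) z`. Fubini then applies although `μ`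
need not be σ-finite, because the integrand is a continuous compactly supported kernel times a
bounded measurable function, so it vanishes off a rectangle of finite measure.
-/

open Function
open scoped Pointwise

section Fubini

variable {X Y E : Type*} [MeasurableSpace X] [MeasurableSpace Y]
  [NormedAddCommGroup E] [NormedSpace ℝ E] {μ : Measure X} {ν : Measure Y}

theorem integral_integral_eq_setIntegral_setIntegral {f : X → Y → E} {s : Set X} {t : Set Y}
    (hst : ∀ x y, f x y ≠ 0 → x ∈ s ∧ y ∈ t) :
    ∫ x, ∫ y, f x y ∂ν ∂μ = ∫ x in s, ∫ y in t, f x y ∂ν ∂μ := by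
  have hx : ∀ x ∉ s, ∀ y, f x y = 0 := fun x hx y => by
    by_contra h
    exact hx (hst x y h).1
  have hy : ∀ x, ∀ y ∉ t, f x y = 0 := fun x y hy => by
    by_contra h
    exact hy (hst x y h).2
  symm
  calc ∫ x in s, ∫ y in t, f x y ∂ν ∂μ = ∫ x in s, ∫ y, f x y ∂ν ∂μ := by
        congr 1 with x
        exact setIntegral_eq_integral_of_forall_compl_eq_zero (hy x)
    _ = ∫ x, ∫ y, f x y ∂ν ∂μ :=
        setIntegral_eq_integral_of_forall_compl_eq_zero fun x hxs => by simp [hx x hxs]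

/-- No σ-finiteness is needed: the restrictions of `μ` and `ν` to the rectangle are finite. -/
theorem integral_integral_swap_of_bounded_of_vanishing_off {f : X → Y → E}
    (hf : StronglyMeasurable (uncurry f)) {C : ℝ} (hC : ∀ x y, ‖f x y‖ ≤ C)
    {s : Set X} {t : Set Y} (hs : μ s ≠ ⊤) (ht : ν t ≠ ⊤)
    (hst : ∀ x y, f x y ≠ 0 → x ∈ s ∧ y ∈ t) :
    ∫ x, ∫ y, f x y ∂ν ∂μ = ∫ y, ∫ x, f x y ∂μ ∂ν := by
  have := isFiniteMeasure_restrict.mpr hs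
  have := isFiniteMeasure_restrict.mpr ht
  have hint : Integrable (uncurry f) ((μ.restrict s).prod (ν.restrict t)) :=
    .of_bound hf.aestronglyMeasurable C (.of_forall fun p => hC p.1 p.2)
  rw [integral_integral_eq_setIntegral_setIntegral hst, integral_integral_swap hint]
  exact (integral_integral_eq_setIntegral_setIntegral (f := fun y x => f x y)
    fun y x h => (hst x y h).symm).symm

variable [TopologicalSpace X] [TopologicalSpace Y] [OpensMeasurableSpace X]
  [OpensMeasurableSpace Y] [IsFiniteMeasureOnCompacts μ] [IsFiniteMeasureOnCompacts ν]

theorem integral_integral_swap_of_hasCompactSupport_mul {𝕜 : Type*} [RCLike 𝕜]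
    {k b : X × Y → 𝕜} (hk : Continuous k) (hk_supp : HasCompactSupport k)
    (hb : StronglyMeasurable b) {C : ℝ} (hC : ∀ p, ‖b p‖ ≤ C) :
    ∫ x, ∫ y, k (x, y) * b (x, y) ∂ν ∂μ = ∫ y, ∫ x, k (x, y) * b (x, y) ∂μ ∂ν := by
  obtain ⟨D, hD⟩ := hk.bounded_above_of_compact_support hk_supp
  refine integral_integral_swap_of_bounded_of_vanishing_off
    ((hk_supp.stronglyMeasurable_of_prod hk).mul hb) (C := D * C)
    (fun x y => ?_) (hk_supp.image continuous_fst).measure_ne_top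
    (hk_supp.image continuous_snd).measure_ne_top fun x y h => ?_
  · rw [norm_mul]
    exact mul_le_mul (hD _) (hC _) (norm_nonneg _) ((norm_nonneg _).trans (hD (x, y)))
  · have hxy : (x, y) ∈ tsupport k := subset_tsupport k (left_ne_zero_of_mul h)
    exact ⟨⟨_, hxy, rfl⟩, ⟨_, hxy, rfl⟩⟩

end Fubini

section QuantumDouble

variable {G : Type*} [Group G]

/-- The integrand of `qdMul μ F₁ F₂ (v, u)`, as a function of `(z, v)`. -/
def qdMulKernel (F₁ F₂ : G × G → ℂ) (u : G) : G × G → ℂ :=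
  fun p => F₁ (p.1, u) * F₂ (p.1⁻¹ * p.2, p.1⁻¹ * u * p.1)

theorem qdRep_apply_act_inv [MeasurableSpace G] [MeasurableMul G] (μ : Measure G)
    [μ.IsMulLeftInvariant] {M : Type*} {ρ : G → M → M}
    (hρ_mul : ∀ g h m, ρ (g * h) m = ρ g (ρ h m)) {φ : M → G}
    (hφ : ∀ g m, φ (ρ g m) = g * φ m * g⁻¹) (F : G × G → ℂ) (ψ : M → ℂ) (z : G) (m : M) :
    qdRep μ ρ φ F ψ (ρ z⁻¹ m) = ∫ v, F (z⁻¹ * v, z⁻¹ * φ m * z) * ψ (ρ v⁻¹ m) ∂μ := by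
  rw [← integral_mul_left_eq_self _ z]
  simp only [qdRep, hφ, inv_inv, inv_mul_cancel_left, ← hρ_mul, mul_inv_rev]

variable [TopologicalSpace G] [IsTopologicalGroup G] {F₁ F₂ : G × G → ℂ}

theorem continuous_qdMulKernel (hF₁ : Continuous F₁) (hF₂ : Continuous F₂) (u : G) :
    Continuous (qdMulKernel F₁ F₂ u) := by
  unfold qdMulKernel
  fun_prop

theorem hasCompactSupport_qdMulKernel (hF₁ : HasCompactSupport F₁) (hF₂ : HasCompactSupport F₂)
    (u : G) : HasCompactSupport (qdMulKernel F₁ F₂ u) := by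
  set K₁ := Prod.fst '' tsupport F₁
  set K₂ := Prod.fst '' tsupport F₂
  have hK₁ : IsCompact K₁ := hF₁.image continuous_fst
  refine (hK₁.prod (hK₁.mul (hF₂.image continuous_fst))).closure_of_subset ?_
  rintro ⟨z, v⟩ h
  have hzK₁ : z ∈ K₁ := ⟨_, subset_tsupport _ (left_ne_zero_of_mul h), rfl⟩
  have hvK₂ : z⁻¹ * v ∈ K₂ := ⟨_, subset_tsupport _ (right_ne_zero_of_mul h), rfl⟩
  exact ⟨hzK₁, z, hzK₁, z⁻¹ * v, hvK₂, mul_inv_cancel_left z v⟩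

end QuantumDouble

theorem qdRep_multiplicative_general
    {G : Type*} [Group G] [TopologicalSpace G] [IsTopologicalGroup G]
    [MeasurableSpace G] [BorelSpace G]
    (μ : Measure G) [μ.IsHaarMeasure]
    {M : Type*} [MeasurableSpace M]
    (ρ : G → M → M)
    (hρ_mul : ∀ g h m, ρ (g * h) m = ρ g (ρ h m))
    (hρ_meas : Measurable fun q : G × M => ρ q.1 q.2)
    (φ : M → G)
    (hφ : ∀ g m, φ (ρ g m) = g * φ m * g⁻¹)
    (F₁ F₂ : G × G → ℂ)
    (hF₁c : Continuous F₁) (hF₁s : HasCompactSupport F₁)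
    (hF₂c : Continuous F₂) (hF₂s : HasCompactSupport F₂)
    (ψ : M → ℂ) (hψ_meas : Measurable ψ) (C : ℝ) (hψ_bdd : ∀ m, ‖ψ m‖ ≤ C) :
    ∀ m, qdRep μ ρ φ (qdMul μ F₁ F₂) ψ m = qdRep μ ρ φ F₁ (qdRep μ ρ φ F₂ ψ) m := by
  intro m
  have hb : Measurable fun p : G × G => ψ (ρ p.2⁻¹ m) :=
    hψ_meas.comp (hρ_meas.comp (measurable_snd.inv.prodMk measurable_const))
  calc qdRep μ ρ φ (qdMul μ F₁ F₂) ψ m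
      = ∫ v, ∫ z, qdMulKernel F₁ F₂ (φ m) (z, v) * ψ (ρ v⁻¹ m) ∂μ ∂μ := by
        simp only [qdRep, qdMul, integral_mul_const, qdMulKernel]
    _ = ∫ z, ∫ v, qdMulKernel F₁ F₂ (φ m) (z, v) * ψ (ρ v⁻¹ m) ∂μ ∂μ :=
        (integral_integral_swap_of_hasCompactSupport_mul (continuous_qdMulKernel hF₁c hF₂c _)
          (hasCompactSupport_qdMulKernel hF₁s hF₂s _) hb.stronglyMeasurable
          fun p => hψ_bdd _).symm
    _ = ∫ z, F₁ (z, φ m) * qdRep μ ρ φ F₂ ψ (ρ z⁻¹ m) ∂μ := by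
        simp only [qdRep_apply_act_inv μ hρ_mul hφ, qdMulKernel, mul_assoc, integral_const_mul]

/-- For a locally compact group `G` with left Haar measure, a measurable `G`-action `ρ`
on a measure space `M` and a measurable map `φ : M → G` with
`φ(ρ(g)m) = g·φ(m)·g⁻¹`, the assignment `F ↦ Π(F)` is multiplicative for the
quantum-double multiplication on continuous compactly supported functions, acting on
bounded measurable `ψ : M → ℂ`. -/
theorem qdRep_multiplicative
    {G : Type*} [Group G] [TopologicalSpace G] [IsTopologicalGroup G]
    [LocallyCompactSpace G] [MeasurableSpace G] [BorelSpace G]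
    (μ : Measure G) [μ.IsHaarMeasure]
    {M : Type*} [MeasurableSpace M] (ν : Measure M)
    (ρ : G → M → M)
    (hρ_one : ∀ m, ρ 1 m = m)
    (hρ_mul : ∀ g h m, ρ (g * h) m = ρ g (ρ h m))
    (hρ_meas : Measurable fun q : G × M => ρ q.1 q.2)
    (φ : M → G) (hφ_meas : Measurable φ)
    (hφ : ∀ g m, φ (ρ g m) = g * φ m * g⁻¹)
    (F₁ F₂ : G × G → ℂ)
    (hF₁c : Continuous F₁) (hF₁s : HasCompactSupport F₁)
    (hF₂c : Continuous F₂) (hF₂s : HasCompactSupport F₂)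
    (ψ : M → ℂ) (hψ_meas : Measurable ψ) (C : ℝ) (hψ_bdd : ∀ m, ‖ψ m‖ ≤ C) :
    ∀ m, qdRep μ ρ φ (qdMul μ F₁ F₂) ψ m = qdRep μ ρ φ F₁ (qdRep μ ρ φ F₂ ψ) m :=
  qdRep_multiplicative_general μ ρ hρ_mul hρ_meas φ hφ F₁ F₂ hF₁c hF₁s hF₂c hF₂s ψ hψ_meas C hψ_bdd
end

section
/- Let G be a locally compact topological group with a left Haar measure dz. Then the involution F*(v,u) = conj(F(v⁻¹, v⁻¹uv)) on continuous compactly supported functions G × G → ℂ is an anti-homomorphism for the quantum-double multiplication: for all continuous compactly supported F₁, F₂ : G × G → ℂ one has (F₁ • F₂)* = F₂* • F₁*, where (F₁ • F₂)(v,u) = ∫_G F₁(z,u) F₂(z⁻¹v, z⁻¹uz) dz. Moreover (F*)* = F. -/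
open MeasureTheory

/-- The involution of the quantum double `D(G)`: `F*(v,u) = conj (F(v⁻¹, v⁻¹uv))`. -/
def qdStar {G : Type*} [Group G] (F : G × G → ℂ) : G × G → ℂ :=
  fun p => star (F (p.1⁻¹, p.1⁻¹ * p.2 * p.1))

theorem qdStar_qdStar {G : Type*} [Group G] (F : G × G → ℂ) : qdStar (qdStar F) = F := by
  funext ⟨v, u⟩
  simp only [qdStar, inv_inv, star_star]
  congr 2
  group

/-- The two sides differ by the substitution `z ↦ v⁻¹ z`. Conjugation commutes with the
Bochner integral also for non-integrable integrands, where both sides are the junk value `0`. -/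
theorem qdStar_qdMul {G : Type*} [Group G] [MeasurableSpace G] [MeasurableMul G]
    (μ : Measure G) [μ.IsMulLeftInvariant] (F₁ F₂ : G × G → ℂ) :
    qdStar (qdMul μ F₁ F₂) = qdMul μ (qdStar F₂) (qdStar F₁) := by
  funext ⟨v, u⟩
  let f : G → ℂ := fun z =>
    star (F₁ (z, v⁻¹ * u * v) * F₂ (z⁻¹ * v⁻¹, z⁻¹ * (v⁻¹ * u * v) * z))
  calc qdStar (qdMul μ F₁ F₂) (v, u)
      = ∫ z, f z ∂μ := integral_conj.symm
    _ = ∫ z, f (v⁻¹ * z) ∂μ := (integral_mul_left_eq_self f v⁻¹).symm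
    _ = qdMul μ (qdStar F₂) (qdStar F₁) (v, u) := by
      congr 1
      funext z
      simp only [f, qdStar, star_mul', mul_inv_rev, inv_inv]
      rw [mul_comm]
      congr 2 <;> group

theorem qdStar_antihomomorphism_and_involutive_general
    {G : Type*} [Group G] [TopologicalSpace G] [IsTopologicalGroup G]
    [MeasurableSpace G] [BorelSpace G]
    (μ : Measure G) [μ.IsHaarMeasure]
    (F₁ F₂ : G × G → ℂ) :
    qdStar (qdMul μ F₁ F₂) = qdMul μ (qdStar F₂) (qdStar F₁) ∧
    qdStar (qdStar F₁) = F₁ :=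
  ⟨qdStar_qdMul μ F₁ F₂, qdStar_qdStar F₁⟩

/-- For a locally compact group `G` with a left Haar measure, the involution
`F*(v,u) = conj (F(v⁻¹, v⁻¹uv))` is an anti-homomorphism for the quantum-double
multiplication on continuous compactly supported functions, and it is involutive:
`(F*)* = F`. -/
theorem qdStar_antihomomorphism_and_involutive
    {G : Type*} [Group G] [TopologicalSpace G] [IsTopologicalGroup G]
    [LocallyCompactSpace G] [MeasurableSpace G] [BorelSpace G]
    (μ : Measure G) [μ.IsHaarMeasure]
    (F₁ F₂ : G × G → ℂ)
    (hF₁c : Continuous F₁) (hF₁s : HasCompactSupport F₁)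
    (hF₂c : Continuous F₂) (hF₂s : HasCompactSupport F₂) :
    qdStar (qdMul μ F₁ F₂) = qdMul μ (qdStar F₂) (qdStar F₁) ∧
    qdStar (qdStar F₁) = F₁ :=
  qdStar_antihomomorphism_and_involutive_general μ F₁ F₂
end

section
/- Let G be a group and consider tuples (A, B, x₁, …, x_k) ∈ G^(2+k). For g ∈ G define ρ(g) : (A, B, x₁, …, x_k) ↦ (g A g⁻¹, [g,A] B g⁻¹, [g,A] x₁ [g,A]⁻¹, …, [g,A] x_k [g,A]⁻¹), where [g,A] = g A g⁻¹ A⁻¹. Then ρ is a left action of G on G^(2+k): ρ(e) = id and ρ(g₁g₂) = ρ(g₁) ∘ ρ(g₂) for all g₁, g₂ ∈ G. -/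
def gcomm {G : Type*} [Group G] (x y : G) : G := x * y * x⁻¹ * y⁻¹

/-! The commutator `[g, A]` is a crossed homomorphism in `g` for the conjugation action on `A`:
`[g₁ g₂, A] = [g₁, g₂ A g₂⁻¹] [g₂, A]`. This is exactly what makes the `B`-component and the
conjugated components compose correctly, while the `A`-component is plain conjugation. -/

section Commutator

variable {G : Type*} [Group G]

@[simp]
theorem gcomm_one_left (A : G) : gcomm 1 A = 1 := by
  simp [gcomm]

theorem gcomm_mul_left (g₁ g₂ A : G) :
    gcomm (g₁ * g₂) A = gcomm g₁ (g₂ * A * g₂⁻¹) * gcomm g₂ A := by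
  simp only [gcomm]
  group

end Commutator

/-- The map `ρ(g) : (A, B, x₁, …, x_k) ↦ (g A g⁻¹, [g,A] B g⁻¹, [g,A] xⱼ [g,A]⁻¹)`
is a left action of `G` on `G^(2+k)`. -/
theorem action_for_curve_a {G : Type*} [Group G] {k : ℕ}
    (ρ : G → (G × G × (Fin k → G)) → (G × G × (Fin k → G)))
    (hρ : ∀ (g A B : G) (x : Fin k → G),
      ρ g (A, B, x) =
        (g * A * g⁻¹,
         gcomm g A * B * g⁻¹,
         fun l => gcomm g A * x l * (gcomm g A)⁻¹)) :
    (∀ p, ρ 1 p = p) ∧ (∀ g₁ g₂ p, ρ (g₁ * g₂) p = ρ g₁ (ρ g₂ p)) := by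
  constructor
  · rintro ⟨A, B, x⟩
    simp [hρ]
  · rintro g₁ g₂ ⟨A, B, x⟩
    rw [hρ, hρ, hρ, gcomm_mul_left]
    simp only [Prod.mk.injEq, funext_iff]
    refine ⟨by group, by group, fun l => by group⟩
end

section
/- Let G be a group, h ∈ G, n ≥ 2, V a vector space (over any field), and for 1 ≤ i ≤ n−1 let β_i : G^n → G^n be the bijection with (β_i v)_i = v_{i+1}, (β_i v)_{i+1} = (v_{i+1} h v_{i+1}⁻¹)⁻¹ v_i and other components unchanged, and let τ_i : V^{⊗n} → V^{⊗n} be the linear map exchanging the i-th and (i+1)-th tensor factors. On the space of functions ψ : G^n → V^{⊗n} define L_i ψ = τ_i ∘ ψ ∘ β_i⁻¹. Then the operators L_i are linear bijections satisfying the braid relations L_i L_j = L_j L_i for |i − j| ≥ 2 and L_i L_{i+1} L_i = L_{i+1} L_i L_{i+1}, so they define a representation of the Artin braid group on n strands on the space of functions G^n → V^{⊗n}. -/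
open scoped TensorProduct

/-- The braid generator `β_i` on `G^n` (0-indexed: it acts on the components `i` and
`i+1`): `(β_i v)_i = v_{i+1}`, `(β_i v)_{i+1} = (v_{i+1} h v_{i+1}⁻¹)⁻¹ v_i`. -/
def braidN {G : Type*} [Group G] (h : G) {n : ℕ} (i : ℕ) (v : Fin n → G) : Fin n → G :=
  fun t =>
    if h1 : (t : ℕ) = i then
      if h2 : i + 1 < n then v ⟨i + 1, h2⟩ else v t
    else if h3 : (t : ℕ) = i + 1 then
      (v t * h * (v t)⁻¹)⁻¹ * v ⟨i, by have := t.isLt; omega⟩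
    else v t

/-- The inverse of the braid generator `β_i`. -/
def braidInvN {G : Type*} [Group G] (h : G) {n : ℕ} (i : ℕ) (w : Fin n → G) : Fin n → G :=
  fun t =>
    if h1 : (t : ℕ) = i then
      if h2 : i + 1 < n then (w t * h * (w t)⁻¹) * w ⟨i + 1, h2⟩ else w t
    else if h3 : (t : ℕ) = i + 1 then
      w ⟨i, by have := t.isLt; omega⟩
    else w t

/-- The flip `τ_i` of the `i`-th and `(i+1)`-th factors of the `n`-fold tensor power
of `V`. -/
noncomputable def flipTensor (𝕜 : Type*) [Field 𝕜] (V : Type*) [AddCommGroup V]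
    [Module 𝕜 V] {n : ℕ} (i : ℕ) :
    (⨂[𝕜] _ : Fin n, V) →ₗ[𝕜] (⨂[𝕜] _ : Fin n, V) :=
  if h : i + 1 < n then
    (PiTensorProduct.reindex 𝕜 (fun _ : Fin n => V)
      (Equiv.swap ⟨i, Nat.lt_of_succ_lt h⟩ ⟨i + 1, h⟩)).toLinearMap
  else LinearMap.id

/-- The operator `L_i ψ = τ_i ∘ ψ ∘ β_i⁻¹` on functions `ψ : G^n → V^{⊗n}`. -/
noncomputable def braidOp (𝕜 : Type*) [Field 𝕜] (V : Type*) [AddCommGroup V]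
    [Module 𝕜 V] {G : Type*} [Group G] (h : G) {n : ℕ} (i : ℕ)
    (ψ : (Fin n → G) → ⨂[𝕜] _ : Fin n, V) : (Fin n → G) → ⨂[𝕜] _ : Fin n, V :=
  fun v => flipTensor 𝕜 V i (ψ (braidInvN h i v))

/-!
On the holonomies `u_k = v_k h v_k⁻¹`, `β_i⁻¹` acts by the Hurwitz move
`(u_i, u_{i+1}) ↦ (u_i u_{i+1} u_i⁻¹, u_i)`, and the braid relations for the `β_i⁻¹` are checked
coordinatewise; in the one nontrivial coordinate both sides of the braid relation reduce to
`u_i u_{i+1} v_{i+2}`. The `τ_i` are adjacent transpositions, which satisfy the Coxeter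
relations. Since `L_i L_j ψ = τ_i τ_j ∘ ψ ∘ β_j⁻¹ β_i⁻¹` and the braid relations read the same
backwards, the relations for the `β_i⁻¹` and for the `τ_i` combine into those for the `L_i`.
-/

section Hurwitz

variable {G : Type*} [Group G] (h : G) {n i : ℕ}

lemma braidN_apply_left (hi : i + 1 < n) (v : Fin n → G) :
    braidN h i v ⟨i, by omega⟩ = v ⟨i + 1, hi⟩ := by
  simp [braidN, hi]

lemma braidN_apply_right (hi : i + 1 < n) (v : Fin n → G) :
    braidN h i v ⟨i + 1, hi⟩ =
      (v ⟨i + 1, hi⟩ * h * (v ⟨i + 1, hi⟩)⁻¹)⁻¹ * v ⟨i, by omega⟩ := by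
  simp [braidN]

lemma braidN_apply_of_ne {t : ℕ} (ht : t < n) (hti : t ≠ i) (hti' : t ≠ i + 1)
    (v : Fin n → G) : braidN h i v ⟨t, ht⟩ = v ⟨t, ht⟩ := by
  simp [braidN, hti, hti']

lemma braidInvN_apply_left (hi : i + 1 < n) (w : Fin n → G) :
    braidInvN h i w ⟨i, by omega⟩ =
      w ⟨i, by omega⟩ * h * (w ⟨i, by omega⟩)⁻¹ * w ⟨i + 1, hi⟩ := by
  simp [braidInvN, hi]

lemma braidInvN_apply_right (hi : i + 1 < n) (w : Fin n → G) :
    braidInvN h i w ⟨i + 1, hi⟩ = w ⟨i, by omega⟩ := by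
  simp [braidInvN]

lemma braidInvN_apply_of_ne {t : ℕ} (ht : t < n) (hti : t ≠ i) (hti' : t ≠ i + 1)
    (w : Fin n → G) : braidInvN h i w ⟨t, ht⟩ = w ⟨t, ht⟩ := by
  simp [braidInvN, hti, hti']

lemma braidInvN_braidN (hi : i + 1 < n) (v : Fin n → G) :
    braidInvN h i (braidN h i v) = v := by
  funext ⟨t, ht⟩
  obtain rfl | rfl | _ : t = i ∨ t = i + 1 ∨ t ≠ i ∧ t ≠ i + 1 := by omega
  all_goals simp (disch := omega) only [braidInvN_apply_left, braidInvN_apply_right,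
    braidInvN_apply_of_ne, braidN_apply_left, braidN_apply_right, braidN_apply_of_ne]
  group

lemma braidN_braidInvN (hi : i + 1 < n) (w : Fin n → G) :
    braidN h i (braidInvN h i w) = w := by
  funext ⟨t, ht⟩
  obtain rfl | rfl | _ : t = i ∨ t = i + 1 ∨ t ≠ i ∧ t ≠ i + 1 := by omega
  all_goals simp (disch := omega) only [braidInvN_apply_left, braidInvN_apply_right,
    braidInvN_apply_of_ne, braidN_apply_left, braidN_apply_right, braidN_apply_of_ne]
  group

lemma braidInvN_comm {i j : ℕ} (hij : i + 2 ≤ j) (hj : j + 1 < n) (v : Fin n → G) :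
    braidInvN h j (braidInvN h i v) = braidInvN h i (braidInvN h j v) := by
  funext ⟨t, ht⟩
  obtain rfl | rfl | rfl | rfl | _ :
      t = i ∨ t = i + 1 ∨ t = j ∨ t = j + 1 ∨ t ≠ i ∧ t ≠ i + 1 ∧ t ≠ j ∧ t ≠ j + 1 := by omega
  all_goals
    simp (disch := omega) only [braidInvN_apply_left, braidInvN_apply_right, braidInvN_apply_of_ne]

lemma braidInvN_braid (hi : i + 2 < n) (v : Fin n → G) :
    braidInvN h i (braidInvN h (i + 1) (braidInvN h i v)) =
      braidInvN h (i + 1) (braidInvN h i (braidInvN h (i + 1) v)) := by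
  funext ⟨t, ht⟩
  obtain rfl | rfl | rfl | _ :
      t = i ∨ t = i + 1 ∨ t = i + 1 + 1 ∨ t ≠ i ∧ t ≠ i + 1 ∧ t ≠ i + 1 + 1 := by omega
  all_goals
    simp (disch := omega) only [braidInvN_apply_left, braidInvN_apply_right, braidInvN_apply_of_ne]
  group

end Hurwitz

lemma Equiv.swap_mul_swap_mul_swap_eq_swap_mul_swap_mul_swap {α : Type*} [DecidableEq α]
    {a b c : α} (hab : a ≠ b) (hac : a ≠ c) (hbc : b ≠ c) :
    swap a b * swap b c * swap a b = swap b c * swap a b * swap b c := by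
  have hl : swap a b * swap b c * swap a b = swap a c := by
    rw [swap_comm a b, swap_comm b c]
    exact swap_mul_swap_mul_swap hbc.symm hac.symm
  rw [hl, swap_mul_swap_mul_swap hab hac, swap_comm]

section Flip

variable (𝕜 : Type*) [Field 𝕜] (V : Type*) [AddCommGroup V] [Module 𝕜 V] {n i : ℕ}

lemma PiTensorProduct.reindex_reindex_perm {ι : Type*} (σ τ : Equiv.Perm ι)
    (x : ⨂[𝕜] _ : ι, V) :
    reindex 𝕜 (fun _ => V) σ (reindex 𝕜 (fun _ => V) τ x) = reindex 𝕜 (fun _ => V) (σ * τ) x :=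
  reindex_reindex τ σ x

def adjSwap (hi : i + 1 < n) : Equiv.Perm (Fin n) := Equiv.swap ⟨i, by omega⟩ ⟨i + 1, hi⟩

lemma flipTensor_apply (hi : i + 1 < n) (x : ⨂[𝕜] _ : Fin n, V) :
    flipTensor 𝕜 V i x = PiTensorProduct.reindex 𝕜 (fun _ => V) (adjSwap hi) x := by
  simp [flipTensor, hi, adjSwap]

lemma flipTensor_flipTensor (x : ⨂[𝕜] _ : Fin n, V) :
    flipTensor 𝕜 V i (flipTensor 𝕜 V i x) = x := by
  by_cases hi : i + 1 < n
  · rw [flipTensor_apply 𝕜 V hi, flipTensor_apply 𝕜 V hi, PiTensorProduct.reindex_reindex_perm,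
      adjSwap, Equiv.swap_mul_self, Equiv.Perm.one_def, PiTensorProduct.reindex_refl,
      LinearEquiv.refl_apply]
  · simp [flipTensor, hi]

lemma adjSwap_mul_comm {j : ℕ} (hij : i + 2 ≤ j) (hi : i + 1 < n) (hj : j + 1 < n) :
    adjSwap hi * adjSwap hj = adjSwap hj * adjSwap hi := by
  refine (Equiv.Perm.Disjoint.commute (Equiv.Perm.disjoint_swap_swap ?_)).eq
  simp only [List.nodup_cons, List.mem_cons, List.not_mem_nil, List.nodup_nil, Fin.ext_iff,
    or_false, not_false_eq_true, and_true]
  omega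

lemma adjSwap_braid (hi : i + 2 < n) :
    adjSwap (i := i) (by omega) * adjSwap hi * adjSwap (i := i) (by omega)
      = adjSwap hi * adjSwap (i := i) (by omega) * adjSwap hi := by
  apply Equiv.swap_mul_swap_mul_swap_eq_swap_mul_swap_mul_swap <;>
    simp only [ne_eq, Fin.mk.injEq] <;> omega

lemma flipTensor_comm {j : ℕ} (hij : i + 2 ≤ j) (hj : j + 1 < n) (x : ⨂[𝕜] _ : Fin n, V) :
    flipTensor 𝕜 V i (flipTensor 𝕜 V j x) = flipTensor 𝕜 V j (flipTensor 𝕜 V i x) := by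
  have hi : i + 1 < n := by omega
  simp only [flipTensor_apply 𝕜 V hi, flipTensor_apply 𝕜 V hj,
    PiTensorProduct.reindex_reindex_perm, adjSwap_mul_comm hij hi hj]

lemma flipTensor_braid (hi : i + 2 < n) (x : ⨂[𝕜] _ : Fin n, V) :
    flipTensor 𝕜 V i (flipTensor 𝕜 V (i + 1) (flipTensor 𝕜 V i x))
      = flipTensor 𝕜 V (i + 1) (flipTensor 𝕜 V i (flipTensor 𝕜 V (i + 1) x)) := by
  simp only [flipTensor_apply 𝕜 V hi, flipTensor_apply 𝕜 V (show i + 1 < n by omega),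
    PiTensorProduct.reindex_reindex_perm, ← mul_assoc, adjSwap_braid hi]

end Flip

section BraidOp

variable (𝕜 : Type*) [Field 𝕜] (V : Type*) [AddCommGroup V] [Module 𝕜 V]
  {G : Type*} [Group G] (h : G) {n i : ℕ}

lemma braidOp_smul_add (a : 𝕜) (ψ χ : (Fin n → G) → ⨂[𝕜] _ : Fin n, V) :
    braidOp 𝕜 V h i (a • ψ + χ) = a • braidOp 𝕜 V h i ψ + braidOp 𝕜 V h i χ := by
  funext v
  simp only [braidOp, Pi.add_apply, Pi.smul_apply, map_add, map_smul]

lemma braidOp_bijective (hi : i + 1 < n) : Function.Bijective (braidOp 𝕜 V h (n := n) i) := by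
  refine Function.bijective_iff_has_inverse.mpr
    ⟨fun ψ v => flipTensor 𝕜 V i (ψ (braidN h i v)), fun ψ => ?_, fun ψ => ?_⟩ <;>
  funext v <;>
  simp only [braidOp, braidInvN_braidN h hi, braidN_braidInvN h hi, flipTensor_flipTensor]

lemma braidOp_comm {j : ℕ} (hij : i + 2 ≤ j) (hj : j + 1 < n)
    (ψ : (Fin n → G) → ⨂[𝕜] _ : Fin n, V) :
    braidOp 𝕜 V h i (braidOp 𝕜 V h j ψ) = braidOp 𝕜 V h j (braidOp 𝕜 V h i ψ) := by
  funext v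
  simp only [braidOp, braidInvN_comm h hij hj, flipTensor_comm 𝕜 V hij hj]

lemma braidOp_braid (hi : i + 2 < n) (ψ : (Fin n → G) → ⨂[𝕜] _ : Fin n, V) :
    braidOp 𝕜 V h i (braidOp 𝕜 V h (i + 1) (braidOp 𝕜 V h i ψ))
      = braidOp 𝕜 V h (i + 1) (braidOp 𝕜 V h i (braidOp 𝕜 V h (i + 1) ψ)) := by
  funext v
  simp only [braidOp, braidInvN_braid h hi, flipTensor_braid 𝕜 V hi]

end BraidOp

theorem braid_group_representation_on_states_general
    (𝕜 : Type*) [Field 𝕜] (V : Type*) [AddCommGroup V] [Module 𝕜 V]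
    {G : Type*} [Group G] (h : G) {n : ℕ} :
    -- `braidInvN` really is the inverse of the bijection `β_i`
    (∀ i : ℕ, i + 1 < n →
      Function.LeftInverse (braidInvN h (n := n) i) (braidN h i) ∧
      Function.RightInverse (braidInvN h (n := n) i) (braidN h i)) ∧
    -- each `L_i` is linear ...
    (∀ (i : ℕ) (a : 𝕜) (ψ χ : (Fin n → G) → ⨂[𝕜] _ : Fin n, V),
      braidOp 𝕜 V h (n := n) i (a • ψ + χ)
        = a • braidOp 𝕜 V h i ψ + braidOp 𝕜 V h i χ) ∧
    -- ... and bijective ...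
    (∀ i : ℕ, i + 1 < n → Function.Bijective (braidOp 𝕜 V h (n := n) i)) ∧
    -- ... and the `L_i` satisfy the braid relations
    (∀ i j : ℕ, i + 1 < n → j + 1 < n → (i + 2 ≤ j ∨ j + 2 ≤ i) →
      ∀ ψ : (Fin n → G) → ⨂[𝕜] _ : Fin n, V,
        braidOp 𝕜 V h i (braidOp 𝕜 V h j ψ) = braidOp 𝕜 V h j (braidOp 𝕜 V h i ψ)) ∧
    (∀ i : ℕ, i + 2 < n →
      ∀ ψ : (Fin n → G) → ⨂[𝕜] _ : Fin n, V,
        braidOp 𝕜 V h i (braidOp 𝕜 V h (i + 1) (braidOp 𝕜 V h i ψ))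
          = braidOp 𝕜 V h (i + 1) (braidOp 𝕜 V h i (braidOp 𝕜 V h (i + 1) ψ))) := by
  refine ⟨fun i hi => ⟨braidInvN_braidN h hi, braidN_braidInvN h hi⟩,
    fun i => braidOp_smul_add 𝕜 V h, fun i => braidOp_bijective 𝕜 V h, ?_,
    fun i hi => braidOp_braid 𝕜 V h hi⟩
  rintro i j hi hj (hij | hji) ψ
  · exact braidOp_comm 𝕜 V h hij hj ψ
  · exact (braidOp_comm 𝕜 V h hji hi ψ).symm

/-- The operators `L_i ψ = τ_i ∘ ψ ∘ β_i⁻¹` are linear bijections satisfying the Artin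
braid relations, hence define a representation of the braid group on `n` strands on
the space of functions `G^n → V^{⊗n}`. -/
theorem braid_group_representation_on_states
    (𝕜 : Type*) [Field 𝕜] (V : Type*) [AddCommGroup V] [Module 𝕜 V]
    {G : Type*} [Group G] (h : G) {n : ℕ} (hn : 2 ≤ n) :
    -- `braidInvN` really is the inverse of the bijection `β_i`
    (∀ i : ℕ, i + 1 < n →
      Function.LeftInverse (braidInvN h (n := n) i) (braidN h i) ∧
      Function.RightInverse (braidInvN h (n := n) i) (braidN h i)) ∧
    -- each `L_i` is linear ...
    (∀ (i : ℕ) (a : 𝕜) (ψ χ : (Fin n → G) → ⨂[𝕜] _ : Fin n, V),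
      braidOp 𝕜 V h (n := n) i (a • ψ + χ)
        = a • braidOp 𝕜 V h i ψ + braidOp 𝕜 V h i χ) ∧
    -- ... and bijective ...
    (∀ i : ℕ, i + 1 < n → Function.Bijective (braidOp 𝕜 V h (n := n) i)) ∧
    -- ... and the `L_i` satisfy the braid relations
    (∀ i j : ℕ, i + 1 < n → j + 1 < n → (i + 2 ≤ j ∨ j + 2 ≤ i) →
      ∀ ψ : (Fin n → G) → ⨂[𝕜] _ : Fin n, V,
        braidOp 𝕜 V h i (braidOp 𝕜 V h j ψ) = braidOp 𝕜 V h j (braidOp 𝕜 V h i ψ)) ∧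
    (∀ i : ℕ, i + 2 < n →
      ∀ ψ : (Fin n → G) → ⨂[𝕜] _ : Fin n, V,
        braidOp 𝕜 V h i (braidOp 𝕜 V h (i + 1) (braidOp 𝕜 V h i ψ))
          = braidOp 𝕜 V h (i + 1) (braidOp 𝕜 V h i (braidOp 𝕜 V h (i + 1) ψ))) :=
  braid_group_representation_on_states_general 𝕜 V h
end

section
/- Let G be a locally compact topological group with a left Haar measure dz, let n ≥ 1, fix 1 ≤ i ≤ n and h ∈ G, and let V be a complex Banach space. For a continuous compactly supported F : G × G → ℂ define the operator Π_i(F) on bounded measurable functions ψ : G^n → V by (Π_i(F)ψ)(v₁, …, v_n) = ∫_G F(z, v_i h v_i⁻¹) ψ(v₁, …, v_{i−1}, z⁻¹ v_i, v_{i+1}, …, v_n) dz. Then Π_i is multiplicative for the quantum-double multiplication: Π_i(F₁ • F₂)ψ = Π_i(F₁)(Π_i(F₂)ψ) pointwise for all continuous compactly supported F₁, F₂ : G × G → ℂ and all bounded measurable ψ, where (F₁ • F₂)(v,u) = ∫_G F₁(z,u) F₂(z⁻¹v, z⁻¹uz) dz. -/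
/-!
At a point `v`, put `u = v_i h v_i⁻¹` and `φ w = ψ (v with v_i replaced by w⁻¹ v_i)`. Since
`(z⁻¹ v_i) h (z⁻¹ v_i)⁻¹ = z⁻¹ u z`, both sides become integrals of the compactly supported
kernel `K z w = F₁(z,u) F₂(w, z⁻¹uz)` against `φ`:
`∫_w (∫_z K(z, z⁻¹w) dz) φ(w) dw = ∫_z ∫_w K(z,w) φ(zw) dw dz`.
This is Fubini followed by the left translation `w ↦ zw`. Fubini holds although the Haar measure
need not be σ-finite, because the integrand is bounded and vanishes off a compact set.
-/

open MeasureTheory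

/-- The representation of the quantum double attached to the `i`-th puncture with
conjugacy-class representative `h`:
`(Π_i(F)ψ)(v₁,…,v_n) = ∫_G F(z, v_i h v_i⁻¹) ψ(v₁,…,z⁻¹v_i,…,v_n) dz`. -/
noncomputable def qdRepPuncture {G : Type*} [Group G] [MeasurableSpace G]
    (μ : Measure G) {n : ℕ} (i : Fin n) (h : G) {V : Type*}
    [NormedAddCommGroup V] [NormedSpace ℂ V]
    (F : G × G → ℂ) (ψ : (Fin n → G) → V) : (Fin n → G) → V :=
  fun v => ∫ z, F (z, v i * h * (v i)⁻¹) • ψ (Function.update v i (z⁻¹ * v i)) ∂μ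

open Function Set

section Fubini

variable {X Y E : Type*} [MeasurableSpace X] [MeasurableSpace Y]
  [NormedAddCommGroup E] [NormedSpace ℝ E] {μ : Measure X} {ν : Measure Y}

theorem integral_integral_eq_setIntegral_setIntegral_of_support_subset {f : X → Y → E}
    {s : Set X} {t : Set Y} (hst : support (uncurry f) ⊆ s ×ˢ t) :
    ∫ x, ∫ y, f x y ∂ν ∂μ = ∫ x in s, ∫ y in t, f x y ∂ν ∂μ := by
  have hf : ∀ x y, f x y ≠ 0 → x ∈ s ∧ y ∈ t := fun x y hxy => hst (a := (x, y)) hxy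
  calc ∫ x, ∫ y, f x y ∂ν ∂μ = ∫ x, ∫ y in t, f x y ∂ν ∂μ := by
        congr 1 with x
        refine (setIntegral_eq_integral_of_forall_compl_eq_zero fun y hy => ?_).symm
        by_contra hxy
        exact hy (hf x y hxy).2
    _ = ∫ x in s, ∫ y in t, f x y ∂ν ∂μ := by
        refine (setIntegral_eq_integral_of_forall_compl_eq_zero fun x hx => ?_).symm
        have hfx : ∀ y, f x y = 0 := fun y => by
          by_contra hxy
          exact hx (hf x y hxy).1
        simp [hfx]

variable [TopologicalSpace X] [TopologicalSpace Y]
  [IsFiniteMeasureOnCompacts μ] [IsFiniteMeasureOnCompacts ν]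

theorem integral_integral_swap_of_stronglyMeasurable_of_hasCompactSupport {f : X → Y → E}
    (hf : StronglyMeasurable (uncurry f)) (hfs : HasCompactSupport (uncurry f))
    {C : ℝ} (hfC : ∀ p, ‖uncurry f p‖ ≤ C) :
    ∫ x, ∫ y, f x y ∂ν ∂μ = ∫ y, ∫ x, f x y ∂μ ∂ν := by
  set s := Prod.fst '' tsupport (uncurry f)
  set t := Prod.snd '' tsupport (uncurry f)
  have : Fact (μ s < ⊤) := ⟨(hfs.image continuous_fst).measure_lt_top⟩
  have : Fact (ν t < ⊤) := ⟨(hfs.image continuous_snd).measure_lt_top⟩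
  have hst : support (uncurry f) ⊆ s ×ˢ t := (subset_tsupport _).trans subset_prod
  have hts : support (uncurry fun y x => f x y) ⊆ t ×ˢ s := by
    rintro ⟨y, x⟩ hyx
    exact (hst (a := (x, y)) hyx).symm
  rw [integral_integral_eq_setIntegral_setIntegral_of_support_subset hst,
    integral_integral_eq_setIntegral_setIntegral_of_support_subset hts]
  exact integral_integral_swap
    (Integrable.of_bound hf.aestronglyMeasurable C (.of_forall hfC))

end Fubini

section Haar

variable {G 𝕜 E : Type*} [Group G] [TopologicalSpace G] [IsTopologicalGroup G]
  [MeasurableSpace G] [BorelSpace G] {μ : Measure G} [μ.IsMulLeftInvariant]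
  [IsFiniteMeasureOnCompacts μ] [RCLike 𝕜] [NormedAddCommGroup E] [NormedSpace 𝕜 E]
  [NormedSpace ℝ E] [CompleteSpace E]

theorem integral_integral_inv_mul_smul_eq {K : G → G → 𝕜} (hK : Continuous (uncurry K))
    (hKs : HasCompactSupport (uncurry K)) {φ : G → E} (hφ : StronglyMeasurable φ)
    {C : ℝ} (hφC : ∀ w, ‖φ w‖ ≤ C) :
    ∫ w, (∫ z, K z (z⁻¹ * w) ∂μ) • φ w ∂μ = ∫ z, ∫ w, K z w • φ (z * w) ∂μ ∂μ := by
  let e : G × G ≃ₜ G × G := (Homeomorph.prodComm G G).trans (Homeomorph.shearMulRight G).symm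
  let k : G × G → 𝕜 := uncurry K ∘ e
  have hk : Continuous k := hK.comp e.continuous
  have hks : HasCompactSupport k := hKs.comp_homeomorph e
  obtain ⟨M, hM⟩ := hk.bounded_above_of_compact_support hks
  have hswap := integral_integral_swap_of_stronglyMeasurable_of_hasCompactSupport
    (μ := μ) (ν := μ) (f := fun w z => K z (z⁻¹ * w) • φ w)
    ((hks.stronglyMeasurable_of_prod hk).smul (hφ.comp_measurable measurable_fst))
    hks.smul_right (C := M * C) fun p => (norm_smul (k p) (φ p.1)).trans_le
      (mul_le_mul (hM p) (hφC p.1) (norm_nonneg _) ((norm_nonneg _).trans (hM p)))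
  calc ∫ w, (∫ z, K z (z⁻¹ * w) ∂μ) • φ w ∂μ
      = ∫ w, ∫ z, K z (z⁻¹ * w) • φ w ∂μ ∂μ := by simp_rw [integral_smul_const]
    _ = ∫ z, ∫ w, K z (z⁻¹ * w) • φ w ∂μ ∂μ := hswap
    _ = ∫ z, ∫ w, K z w • φ (z * w) ∂μ ∂μ := by
        congr 1 with z
        rw [← integral_mul_left_eq_self _ z]
        simp only [inv_mul_cancel_left]

end Haar

theorem HasCompactSupport.uncurry_mul {X Y Z W R : Type*} [TopologicalSpace X]
    [TopologicalSpace Y] [TopologicalSpace Z] [TopologicalSpace W] [R1Space (X × Z)]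
    [MulZeroClass R] {F₁ : X × Y → R} {F₂ : Z × W → R}
    (hF₁ : HasCompactSupport F₁) (hF₂ : HasCompactSupport F₂) (α : X → Y) (β : X → W) :
    HasCompactSupport (uncurry fun x z => F₁ (x, α x) * F₂ (z, β x)) := by
  refine .intro ((hF₁.image continuous_fst).prod (hF₂.image continuous_fst)) ?_
  rintro ⟨x, z⟩ hxz
  by_contra hne
  exact hxz ⟨⟨_, subset_tsupport _ (left_ne_zero_of_mul hne), rfl⟩,
    ⟨_, subset_tsupport _ (right_ne_zero_of_mul hne), rfl⟩⟩

theorem qdRepPuncture_multiplicative_general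
    {G : Type*} [Group G] [TopologicalSpace G] [IsTopologicalGroup G]
    [MeasurableSpace G] [BorelSpace G]
    (μ : Measure G) [μ.IsHaarMeasure]
    {n : ℕ} (i : Fin n) (h : G)
    {V : Type*} [NormedAddCommGroup V] [NormedSpace ℂ V] [CompleteSpace V]
    (F₁ F₂ : G × G → ℂ)
    (hF₁c : Continuous F₁) (hF₁s : HasCompactSupport F₁)
    (hF₂c : Continuous F₂) (hF₂s : HasCompactSupport F₂)
    (ψ : (Fin n → G) → V) (hψ_meas : StronglyMeasurable ψ)
    (C : ℝ) (hψ_bdd : ∀ v, ‖ψ v‖ ≤ C) :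
    ∀ v : Fin n → G,
      qdRepPuncture μ i h (qdMul μ F₁ F₂) ψ v
        = qdRepPuncture μ i h F₁ (qdRepPuncture μ i h F₂ ψ) v := by
  intro v
  set u := v i * h * (v i)⁻¹
  have hK : Continuous (uncurry fun z w => F₁ (z, u) * F₂ (w, z⁻¹ * u * z)) := by fun_prop
  have hφ : StronglyMeasurable fun w => ψ (update v i (w⁻¹ * v i)) :=
    hψ_meas.comp_measurable ((measurable_update v).comp (measurable_inv.mul_const _))
  have hfubini := integral_integral_inv_mul_smul_eq (μ := μ) hK
    (hF₁s.uncurry_mul hF₂s (fun _ => u) fun z => z⁻¹ * u * z) hφ (fun _ => hψ_bdd _)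
  simp only [qdRepPuncture, qdMul, update_self, update_idem]
  refine hfubini.trans (integral_congr_ae (.of_forall fun z => ?_))
  have hconj : z⁻¹ * v i * h * (z⁻¹ * v i)⁻¹ = z⁻¹ * u * z := by
    simp only [u]; group
  change _ = F₁ (z, u) • ∫ w, F₂ (w, z⁻¹ * v i * h * (z⁻¹ * v i)⁻¹) •
    ψ (update v i (w⁻¹ * (z⁻¹ * v i))) ∂μ
  rw [hconj, ← integral_smul]
  refine integral_congr_ae (.of_forall fun w => ?_)
  simp only [mul_smul, mul_inv_rev, mul_assoc]

/-- `Π_i` is multiplicative for the quantum-double multiplication on continuous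
compactly supported functions, acting on bounded measurable `ψ : G^n → V`. -/
theorem qdRepPuncture_multiplicative
    {G : Type*} [Group G] [TopologicalSpace G] [IsTopologicalGroup G]
    [LocallyCompactSpace G] [MeasurableSpace G] [BorelSpace G]
    (μ : Measure G) [μ.IsHaarMeasure]
    {n : ℕ} (i : Fin n) (h : G)
    {V : Type*} [NormedAddCommGroup V] [NormedSpace ℂ V] [CompleteSpace V]
    (F₁ F₂ : G × G → ℂ)
    (hF₁c : Continuous F₁) (hF₁s : HasCompactSupport F₁)
    (hF₂c : Continuous F₂) (hF₂s : HasCompactSupport F₂)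
    (ψ : (Fin n → G) → V) (hψ_meas : StronglyMeasurable ψ)
    (C : ℝ) (hψ_bdd : ∀ v, ‖ψ v‖ ≤ C) :
    ∀ v : Fin n → G,
      qdRepPuncture μ i h (qdMul μ F₁ F₂) ψ v
        = qdRepPuncture μ i h F₁ (qdRepPuncture μ i h F₂ ψ) v :=
  qdRepPuncture_multiplicative_general μ i h F₁ F₂ hF₁c hF₁s hF₂c hF₂s ψ hψ_meas C hψ_bdd
end
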